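/- arXiv:math/0610812 — 8 statements merged into one kernel-verified Lean document; each statement's English description precedes it below -/
import Mathlib

section
/- For all positive integers m and pairwise distinct real numbers q_1, ..., q_m, the sum over i from 1 to m of the product over j ≠ i of (q_i - q_j + 1)/(q_i - q_j) equals m. -/
open Finset Polynomial

lemma basis_coeff_top {ι : Type*} [DecidableEq ι] (s : Finset ι) (v : ι → ℝ)
    (hvs : Set.InjOn v s) (i : ι) (hi : i ∈ s) :
    (Lagrange.basis s v i).coeff (s.card - 1) = ∏ j ∈ s.erase i, (v i - v j)⁻¹ := by
  have hne : Lagrange.basis s v i ≠ 0 := Lagrange.basis_ne_zero hvs hi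
  have hdeg : (Lagrange.basis s v i).natDegree = s.card - 1 := Lagrange.natDegree_basis hvs hi
  rw [← hdeg, coeff_natDegree]
  unfold Lagrange.basis
  have hnz : ∀ j ∈ s.erase i, Lagrange.basisDivisor (v i) (v j) ≠ 0 := by
    intro j hj
    rw [Lagrange.basisDivisor_ne_zero_iff]
    exact fun h => (mem_erase.mp hj).1 (hvs (mem_erase.mp hj).2 hi h.symm)
  rw [leadingCoeff_prod]
  refine Finset.prod_congr rfl fun j hj => ?_
  have hvij : v i ≠ v j := by
    rw [← Lagrange.basisDivisor_ne_zero_iff]; exact hnz j hj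
  unfold Lagrange.basisDivisor
  rw [leadingCoeff_mul, leadingCoeff_C, (monic_X_sub_C (v j)).leadingCoeff, mul_one]

lemma key_sum_zero {ι : Type*} [DecidableEq ι] (s : Finset ι) (v : ι → ℝ)
    (hvs : Set.InjOn v s) (h2 : 2 ≤ s.card) :
    ∑ i ∈ s, ∏ j ∈ s.erase i, (v i - v j)⁻¹ = 0 := by
  have hs : s.Nonempty := Finset.card_pos.mp (by omega)
  have h := Lagrange.sum_basis hvs hs
  have := congrArg (fun p : ℝ[X] => p.coeff (s.card - 1)) h
  simp only [finset_sum_coeff] at this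
  rw [Finset.sum_congr rfl (fun i hi => basis_coeff_top s v hvs i hi)] at this
  rw [this, coeff_one, if_neg (by omega)]

lemma swap_sums {ι : Type*} [DecidableEq ι] (s : Finset ι) (F : ι → Finset ι → ℝ) :
    ∑ i ∈ s, ∑ t ∈ (s.erase i).powerset, F i t
      = ∑ t ∈ s.powerset, ∑ i ∈ t, F i (t.erase i) := by
  rw [Finset.sum_sigma', Finset.sum_sigma']
  refine Finset.sum_nbij' (fun p => ⟨insert p.1 p.2, p.1⟩) (fun p => ⟨p.2, p.1.erase p.2⟩)
    ?_ ?_ ?_ ?_ ?_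
  · rintro ⟨i, t⟩ hp
    simp only [mem_sigma, mem_powerset] at hp ⊢
    obtain ⟨hi, ht⟩ := hp
    refine ⟨Finset.insert_subset hi (ht.trans (erase_subset _ _)), mem_insert_self _ _⟩
  · rintro ⟨t, i⟩ hp
    simp only [mem_sigma, mem_powerset] at hp ⊢
    obtain ⟨ht, hi⟩ := hp
    exact ⟨ht hi, (erase_subset_erase _ ht)⟩
  · rintro ⟨i, t⟩ hp
    simp only [mem_sigma, mem_powerset] at hp
    have hit : i ∉ t := fun h => (mem_erase.mp (hp.2 h)).1 rfl
    simp [Finset.erase_insert hit]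
  · rintro ⟨t, i⟩ hp
    simp only [mem_sigma, mem_powerset] at hp
    simp [Finset.insert_erase hp.2]
  · rintro ⟨i, t⟩ hp
    simp only [mem_sigma, mem_powerset] at hp
    have hit : i ∉ t := fun h => (mem_erase.mp (hp.2 h)).1 rfl
    simp [Finset.erase_insert hit]

theorem stmt0 (m : ℕ) (hm : 0 < m) (q : Fin m → ℝ) (hq : Function.Injective q) :
    ∑ i : Fin m, ∏ j ∈ Finset.univ.erase i, (q i - q j + 1) / (q i - q j) = m := by
  have hqnz : ∀ i j : Fin m, j ≠ i → q i - q j ≠ 0 := by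
    intro i j hij
    exact sub_ne_zero.mpr fun h => hij (hq h.symm)
  have step1 : ∀ i : Fin m, ∏ j ∈ Finset.univ.erase i, (q i - q j + 1) / (q i - q j)
      = ∑ t ∈ (Finset.univ.erase i).powerset, ∏ j ∈ t, (q i - q j)⁻¹ := by
    intro i
    have : ∀ j ∈ Finset.univ.erase i, (q i - q j + 1) / (q i - q j)
        = (q i - q j)⁻¹ + 1 := by
      intro j hj
      have := hqnz i j (mem_erase.mp hj).1
      field_simp
      ring
    rw [Finset.prod_congr rfl this, Finset.prod_add]
    exact Finset.sum_congr rfl fun t _ => by simp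
  rw [Finset.sum_congr rfl fun i _ => step1 i,
    swap_sums Finset.univ (fun i t => ∏ j ∈ t, (q i - q j)⁻¹)]
  have hval : ∀ t ∈ (Finset.univ : Finset (Fin m)).powerset,
      (∑ i ∈ t, ∏ j ∈ t.erase i, (q i - q j)⁻¹) = if t.card = 1 then 1 else 0 := by
    intro t _
    rcases Nat.lt_or_ge t.card 2 with h | h
    · interval_cases h' : t.card
      · simp [Finset.card_eq_zero.mp h']
      · obtain ⟨a, rfl⟩ := Finset.card_eq_one.mp h'
        simp
    · rw [if_neg (by omega)]
      exact key_sum_zero t q (hq.injOn) h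
  rw [Finset.sum_congr rfl hval, Finset.sum_boole, ← Finset.powersetCard_eq_filter,
    Finset.card_powersetCard]
  simp
end

section
/- Let T_{k-1} and T_k be the self-adjoint operators P ↦ pr_{S_{k-1}}(σP) on S_{k-1} and P ↦ pr_{S_k}(σP) on S_k respectively, where S_j is the space of symmetric polynomials of degree ≤ j with the inner product from a positive measure μ on [0,1]^m. Then the largest eigenvalue λ_{k-1} of T_{k-1} is strictly less than the largest eigenvalue λ_k of T_k. -/
/-! Take an eigenvector `v` of `T_{k-1}` for `λ_{k-1}`. Then `σ v = λ_{k-1} v + u` with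
`u ⊥ S_{k-1}`, and `u ≠ 0` because multiplication by `σ` raises the degree. For
`x = v + t u ∈ S_k` one gets `[σ x, x] - λ_{k-1} ‖x‖² = 2 t ‖u‖² + O(t²)`, which is positive for
small `t > 0`; as `λ_k` bounds the Rayleigh quotient of `T_k` on `S_k`, `λ_{k-1} < λ_k`. -/

open RealInnerProductSpace

open Module.End

namespace LinearMap.IsSymmetric

variable {𝕜 F : Type*} [RCLike 𝕜] [NormedAddCommGroup F] [InnerProductSpace 𝕜 F]
  [FiniteDimensional 𝕜 F] {T : F →ₗ[𝕜] F}

theorem re_inner_apply_self_le (hT : T.IsSymmetric) {c : ℝ}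
    (hc : ∀ μ : 𝕜, HasEigenvalue T μ → RCLike.re μ ≤ c) (x : F) :
    RCLike.re (inner 𝕜 (T x) x) ≤ c * ‖x‖ ^ 2 := by
  rcases eq_or_ne x 0 with rfl | hx
  · simp
  have : Nontrivial F := ⟨⟨x, 0, hx⟩⟩
  have hbdd : BddAbove (Set.range fun y : {y : F // y ≠ 0} ↦
      RCLike.re (inner 𝕜 (T y) (y : F)) / ‖(y : F)‖ ^ 2) := by
    refine ⟨‖LinearMap.toContinuousLinearMap T‖, ?_⟩
    rintro _ ⟨y, rfl⟩
    exact (le_abs_self _).trans ((LinearMap.toContinuousLinearMap T).rayleighQuotient_le_norm y)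
  have hle := (le_ciSup hbdd ⟨x, hx⟩).trans
    (by simpa using hc _ hT.hasEigenvalue_iSup_of_finiteDimensional)
  rwa [div_le_iff₀ (by positivity)] at hle

end LinearMap.IsSymmetric

namespace Submodule

variable {𝕜 E : Type*} [RCLike 𝕜] [NormedAddCommGroup E] [InnerProductSpace 𝕜 E]
  (K : Submodule 𝕜 E) [K.HasOrthogonalProjection] (S : E →ₗ[𝕜] E)

noncomputable def compression : K →ₗ[𝕜] K :=
  K.orthogonalProjectionOnto.toLinearMap ∘ₗ S ∘ₗ K.subtype

theorem inner_compression_apply (x y : K) :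
    inner 𝕜 (K.compression S x) y = inner 𝕜 (S x) (y : E) :=
  K.inner_orthogonalProjectionOnto_eq_of_mem_right y (S x)

variable {K S}

theorem isSymmetric_compression (hS : S.IsSymmetric) : (K.compression S).IsSymmetric := by
  intro x y
  rw [inner_compression_apply, hS]
  exact (K.inner_orthogonalProjectionOnto_eq_of_mem_left x (S y)).symm

theorem sub_smul_mem_orthogonal_of_hasEigenvector {μ : 𝕜} {v : K}
    (hv : HasEigenvector (K.compression S) μ v) : S v - μ • (v : E) ∈ Kᗮ := by
  have h : K.starProjection (S v) = μ • (v : E) := congrArg Subtype.val hv.apply_eq_smul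
  simpa only [h] using K.sub_starProjection_mem_orthogonal (S v)

end Submodule

theorem exists_pos_mul_add_mul (a : ℝ) {b : ℝ} (hb : 0 < b) : ∃ t : ℝ, 0 < t * (b + t * a) := by
  refine ⟨b / (|a| + 1), mul_pos (by positivity) ?_⟩
  have hta : b / (|a| + 1) * |a| < b := by
    rw [div_mul_eq_mul_div, div_lt_iff₀ (by positivity)]
    nlinarith
  nlinarith [neg_abs_le a, div_pos hb (by positivity : (0:ℝ) < |a| + 1)]

section Real

variable {E : Type*} [NormedAddCommGroup E] [InnerProductSpace ℝ E]

theorem exists_lt_inner_apply_add_smul {S : E →ₗ[ℝ] E} (hS : S.IsSymmetric) {v u : E} {μ : ℝ}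
    (hvu : ⟪v, u⟫ = 0) (hu : u ≠ 0) (hSv : S v = μ • v + u) :
    ∃ t : ℝ, μ * ‖v + t • u‖ ^ 2 < ⟪S (v + t • u), v + t • u⟫ := by
  obtain ⟨t, ht⟩ := exists_pos_mul_add_mul (⟪S u, u⟫ - μ * ‖u‖ ^ 2)
    (by positivity : 0 < 2 * ‖u‖ ^ 2)
  refine ⟨t, ?_⟩
  have hSvu : ⟪S v, u⟫ = ‖u‖ ^ 2 := by
    rw [hSv, inner_add_left, real_inner_smul_left, hvu, real_inner_self_eq_norm_sq]; ring
  have hSvv : ⟪S v, v⟫ = μ * ‖v‖ ^ 2 := by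
    rw [hSv, inner_add_left, real_inner_smul_left, real_inner_comm v u, hvu,
      real_inner_self_eq_norm_sq]; ring
  have hSuv : ⟪S u, v⟫ = ‖u‖ ^ 2 := by rw [hS, real_inner_comm, hSvu]
  have hnorm : ‖v + t • u‖ ^ 2 = ‖v‖ ^ 2 + t ^ 2 * ‖u‖ ^ 2 := by
    rw [norm_add_sq_real, real_inner_smul_right, hvu, norm_smul, mul_pow, Real.norm_eq_abs, sq_abs]
    ring
  have hexpand : ⟪S (v + t • u), v + t • u⟫ =
      μ * ‖v + t • u‖ ^ 2 + t * (2 * ‖u‖ ^ 2 + t * (⟪S u, u⟫ - μ * ‖u‖ ^ 2)) := by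
    simp only [map_add, map_smul, inner_add_left, inner_add_right, real_inner_smul_left,
      real_inner_smul_right, hSvv, hSvu, hSuv, hnorm]
    ring
  linarith

end Real

theorem stmt6_general {E : Type*} [NormedAddCommGroup E] [InnerProductSpace ℝ E]
    (V W : Submodule ℝ E) (hVW : V ≤ W)
    [FiniteDimensional ℝ W]
    [Submodule.HasOrthogonalProjection V] [Submodule.HasOrthogonalProjection W]
    (S : E →ₗ[ℝ] E)
    (hsym : ∀ f g : E, ⟪S f, g⟫ = ⟪f, S g⟫)
    (hSV : ∀ v ∈ V, S v ∈ W)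
    (hdeg : ∀ v ∈ V, v ≠ 0 → S v ∉ V)
    (T1 : V →ₗ[ℝ] V)
    (hT1 : T1 = (Submodule.orthogonalProjectionOnto V).toLinearMap.comp (S.comp V.subtype))
    (T2 : W →ₗ[ℝ] W)
    (hT2 : T2 = (Submodule.orthogonalProjectionOnto W).toLinearMap.comp (S.comp W.subtype))
    (lam1 lam2 : ℝ)
    (h1 : Module.End.HasEigenvalue T1 lam1)
    (h2max : ∀ μ : ℝ, Module.End.HasEigenvalue T2 μ → μ ≤ lam2) :
    lam1 < lam2 := by
  subst hT1 hT2
  obtain ⟨v, hv⟩ := h1.exists_hasEigenvector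
  have hvV : (v : E) ∈ V := v.2
  set u := S v - lam1 • (v : E) with hu
  have huV : u ∈ Vᗮ := V.sub_smul_mem_orthogonal_of_hasEigenvector hv
  have hu0 : u ≠ 0 := fun h ↦ hdeg v hvV (by simpa using hv.2)
    (by rw [sub_eq_zero.mp h]; exact V.smul_mem lam1 hvV)
  obtain ⟨t, ht⟩ := exists_lt_inner_apply_add_smul hsym
    (V.inner_right_of_mem_orthogonal hvV huV) hu0 (by rw [hu, add_sub_cancel])
  have hxW : (v : E) + t • u ∈ W :=
    W.add_mem (hVW hvV) (W.smul_mem t (W.sub_mem (hSV v hvV) (W.smul_mem lam1 (hVW hvV))))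
  have hle := (W.isSymmetric_compression hsym).re_inner_apply_self_le
    (fun μ hμ ↦ by simpa using h2max μ hμ) ⟨_, hxW⟩
  rw [RCLike.re_to_real, W.inner_compression_apply] at hle
  exact lt_of_mul_lt_mul_right (ht.trans_le hle) (sq_nonneg _)

/-- the largest eigenvalue `λ_{k-1}` of `T_{k-1} = pr_{S_{k-1}}(σ·−)` is strictly
less than the largest eigenvalue `λ_k` of `T_k = pr_{S_k}(σ·−)`. Here `V` models `S_{k-1}` and
`W` models `S_k`, subspaces of an ambient inner product space `E` of functions; `S` is
multiplication by `σ`, symmetric for the inner product, with `0 < [σ f, f]` for nonzero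
`f ∈ W` (positivity of the measure and of `σ`); `σ·S_{k-1} ⊆ S_k` (`hSV`), and multiplication
by `σ` strictly raises degree: `σ v ∉ S_{k-1}` for nonzero `v ∈ S_{k-1}` (`hdeg`). -/
theorem stmt6 {E : Type*} [NormedAddCommGroup E] [InnerProductSpace ℝ E]
    (V W : Submodule ℝ E) (hVW : V ≤ W) (hV : V ≠ ⊥)
    [FiniteDimensional ℝ V] [FiniteDimensional ℝ W]
    [Submodule.HasOrthogonalProjection V] [Submodule.HasOrthogonalProjection W]
    (S : E →ₗ[ℝ] E)
    (hsym : ∀ f g : E, ⟪S f, g⟫ = ⟪f, S g⟫)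
    (hpos : ∀ f : E, f ∈ W → f ≠ 0 → 0 < ⟪S f, f⟫)
    (hSV : ∀ v ∈ V, S v ∈ W)
    (hdeg : ∀ v ∈ V, v ≠ 0 → S v ∉ V)
    (T1 : V →ₗ[ℝ] V)
    (hT1 : T1 = (Submodule.orthogonalProjectionOnto V).toLinearMap.comp (S.comp V.subtype))
    (T2 : W →ₗ[ℝ] W)
    (hT2 : T2 = (Submodule.orthogonalProjectionOnto W).toLinearMap.comp (S.comp W.subtype))
    (lam1 lam2 : ℝ)
    (h1 : Module.End.HasEigenvalue T1 lam1)
    (h1max : ∀ μ : ℝ, Module.End.HasEigenvalue T1 μ → μ ≤ lam1)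
    (h2 : Module.End.HasEigenvalue T2 lam2)
    (h2max : ∀ μ : ℝ, Module.End.HasEigenvalue T2 μ → μ ≤ lam2) :
    lam1 < lam2 :=
  stmt6_general V W hVW S hsym hSV hdeg T1 hT1 T2 hT2 lam1 lam2 h1 h2max
end

section
/- Let (P_κ) be a family of polynomials indexed by partitions κ with P_0 = 1, orthogonal with respect to an inner product [,] and satisfying [P_κ,P_κ] = 1/d_{2κ} with d_{2κ} > 0, and having the positivity property that Σ_{p,q ∈ C} P_κ(y(p,q)) ≥ 0 for every finite set C in the metric space, where y(p,p) = (1,...,1). Suppose F = Σ f_κ P_κ with f_κ ≥ 0 for all κ and f_0 > 0, and F(y(p,q)) ≤ 0 whenever p ≠ q ∈ C. Then |C| ≤ F(1,...,1)/f_0. -/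
/-- the abstract linear programming bound. `X` is the underlying space, `y p q`
records the (squared cosines of the) principal angles between `p` and `q`, with
`y p p = (1,...,1)`. The zonal polynomials `P κ` are indexed by a finite type `ι`
(the partitions of degree ≤ k), normalized by `P κ (1,...,1) = 1` with `P i0 = 1`
the constant polynomial, and satisfy the positivity property on every finite set `C`.
If `F = Σ f_κ P_κ` with `f_κ ≥ 0`, `f_{i0} > 0`, and `F(y(p,q)) ≤ 0` for all `p ≠ q` in `C`,
then `|C| ≤ F(1,...,1)/f_{i0}`. -/
theorem stmt7 {X ι : Type*} [Fintype ι] {m : ℕ}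
    (y : X → X → (Fin m → ℝ)) (hyy : ∀ p, y p p = fun _ => 1)
    (P : ι → (Fin m → ℝ) → ℝ) (i0 : ι) (hP0 : P i0 = fun _ => 1)
    (hPnorm : ∀ κ, P κ (fun _ => 1) = 1)
    (C : Finset X)
    (hposit : ∀ κ : ι, 0 ≤ ∑ p ∈ C, ∑ q ∈ C, P κ (y p q))
    (f : ι → ℝ) (hf : ∀ κ, 0 ≤ f κ) (hf0 : 0 < f i0)
    (F : (Fin m → ℝ) → ℝ) (hF : F = fun z => ∑ κ, f κ * P κ z)
    (hFneg : ∀ p ∈ C, ∀ q ∈ C, p ≠ q → F (y p q) ≤ 0) :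
    (C.card : ℝ) ≤ F (fun _ => 1) / f i0 := by
  classical
  set n : ℝ := (C.card : ℝ) with hn
  have hn0 : 0 ≤ n := by positivity
  have hF1 : F (fun _ => 1) = ∑ κ, f κ := by
    simp [hF, hPnorm]
  -- S = total sum
  set S : ℝ := ∑ p ∈ C, ∑ q ∈ C, F (y p q) with hS
  -- lower bound
  have hswap : S = ∑ κ, f κ * ∑ p ∈ C, ∑ q ∈ C, P κ (y p q) := by
    simp only [hS, hF, Finset.mul_sum]
    calc ∑ p ∈ C, ∑ q ∈ C, ∑ κ, f κ * P κ (y p q)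
        = ∑ p ∈ C, ∑ κ, ∑ q ∈ C, f κ * P κ (y p q) :=
          Finset.sum_congr rfl fun p _ => Finset.sum_comm
      _ = ∑ κ, ∑ p ∈ C, ∑ q ∈ C, f κ * P κ (y p q) := Finset.sum_comm
  have hlow : f i0 * n ^ 2 ≤ S := by
    have h0 : ∑ p ∈ C, ∑ q ∈ C, P i0 (y p q) = n ^ 2 := by
      simp [hP0, hn]; ring
    have := Finset.single_le_sum
      (f := fun κ => f κ * ∑ p ∈ C, ∑ q ∈ C, P κ (y p q))
      (fun κ _ => mul_nonneg (hf κ) (hposit κ)) (Finset.mem_univ i0)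
    rw [h0] at this
    rw [hswap]
    linarith
  -- upper bound
  have hup : S ≤ n * F (fun _ => 1) := by
    have hdiag : ∀ p ∈ C, ∑ q ∈ C, F (y p q) ≤ F (fun _ => 1) := by
      intro p hp
      have : ∑ q ∈ C, F (y p q) =
          F (y p p) + ∑ q ∈ C.erase p, F (y p q) := by
        exact (Finset.add_sum_erase C (fun q => F (y p q)) hp).symm
      rw [this, hyy p]
      have : ∑ q ∈ C.erase p, F (y p q) ≤ 0 := by
        apply Finset.sum_nonpos
        intro q hq
        exact hFneg p hp q (Finset.mem_of_mem_erase hq)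
          (Ne.symm (Finset.ne_of_mem_erase hq))
      linarith
    calc S ≤ ∑ _p ∈ C, F (fun _ => 1) := Finset.sum_le_sum hdiag
    _ = n * F (fun _ => 1) := by simp [hn, mul_comm]
  rcases eq_or_lt_of_le hn0 with h | h
  · rw [← h]
    apply div_nonneg _ hf0.le
    rw [hF1]
    exact Finset.sum_nonneg fun κ _ => hf κ
  · rw [le_div_iff₀ hf0]
    have : f i0 * n ^ 2 ≤ n * F (fun _ => 1) := le_trans hlow hup
    nlinarith
end

section
/- (Christoffel-Darboux formula, abstract version) With the three-term relation σ·𝐏_s = A_s 𝐏_{s+1} + B_s 𝐏_s + C_s 𝐏_{s-1} for vectors of orthogonal polynomials, and Q_κ := Σ_{|μ|=k+1} A_k[κ,μ] P_μ, the reproducing kernel K_k(x,y) := Σ_{|ν|≤k} d_{2ν} P_ν(x) P_ν(y) satisfies (σ(x) − σ(y))·K_k(x,y) = Σ_{|κ|=k} d_{2κ}·(Q_κ(x)P_κ(y) − P_κ(x)Q_κ(y)). -/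
/-- Double sum with a symmetric weight is symmetric in the two polynomial factors. -/
lemma stmt13_cancelB {α : Type} [Fintype α] (d : α → ℝ) (B : α → α → ℝ) (f g : α → ℝ)
    (h : ∀ a b, d a * B a b = d b * B b a) :
    ∑ a, ∑ b, d a * B a b * f b * g a = ∑ a, ∑ b, d a * B a b * g b * f a := by
  rw [Finset.sum_comm]
  refine Finset.sum_congr rfl fun a _ => Finset.sum_congr rfl fun b _ => ?_
  linear_combination (-(f a * g b)) * h a b

/-- Distributing a product over an inner sum. -/
lemma stmt13_split {α β : Type} [Fintype α] [Fintype β] (D : α → ℝ) (a : α → β → ℝ)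
    (p : β → ℝ) (q : α → ℝ) :
    ∑ ν, D ν * ((∑ μ, a ν μ * p μ) * q ν) = ∑ ν, ∑ μ, D ν * a ν μ * p μ * q ν := by
  refine Finset.sum_congr rfl fun ν _ => ?_
  rw [Finset.sum_mul, Finset.mul_sum]
  exact Finset.sum_congr rfl fun μ _ => by ring

/-- Expansion of the two-term (degree `0`) recurrence inside a weighted sum. -/
lemma stmt13_expand2 {α β : Type} [Fintype α] [Fintype β]
    (D : α → ℝ) (a : α → β → ℝ) (b : α → α → ℝ)
    (p : β → ℝ) (q : α → ℝ) (w : α → ℝ) :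
    ∑ ν, D ν * ((∑ μ, a ν μ * p μ + ∑ κ', b ν κ' * q κ') * w ν)
      = (∑ ν, ∑ μ, D ν * a ν μ * p μ * w ν)
        + ∑ ν, ∑ κ', D ν * b ν κ' * q κ' * w ν := by
  rw [← stmt13_split D a p w, ← stmt13_split D b q w, ← Finset.sum_add_distrib]
  exact Finset.sum_congr rfl fun ν _ => by ring

/-- Expansion of the three-term recurrence inside a weighted sum. -/
lemma stmt13_expand3 {α β γ : Type} [Fintype α] [Fintype β] [Fintype γ]
    (D : α → ℝ) (a : α → β → ℝ) (b : α → α → ℝ) (c : α → γ → ℝ)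
    (p : β → ℝ) (q : α → ℝ) (r : γ → ℝ) (w : α → ℝ) :
    ∑ ν, D ν * ((∑ μ, a ν μ * p μ + ∑ κ', b ν κ' * q κ' + ∑ ρ, c ν ρ * r ρ) * w ν)
      = (∑ ν, ∑ μ, D ν * a ν μ * p μ * w ν)
        + (∑ ν, ∑ κ', D ν * b ν κ' * q κ' * w ν)
        + ∑ ν, ∑ ρ, D ν * c ν ρ * r ρ * w ν := by
  rw [← stmt13_split D a p w, ← stmt13_split D b q w, ← stmt13_split D c r w,
    ← Finset.sum_add_distrib, ← Finset.sum_add_distrib]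
  exact Finset.sum_congr rfl fun ν _ => by ring

/-- Christoffel–Darboux formula, abstract version: given the three-term
relations `σ 𝐏_s = A_s 𝐏_{s+1} + B_s 𝐏_s + C_s 𝐏_{s-1}` (pointwise, as functions of
`y ∈ ℝ^m`), the symmetry `(D_s B_s)ᵗ = D_s B_s` and `D_{s+1} C_s = (D_s A_s)ᵗ`, the
reproducing kernel `K_k(x,y) = Σ_{|ν| ≤ k} d_{2ν} P_ν(x) P_ν(y)` satisfies
`(σ(x) − σ(y))·K_k(x,y) = Σ_{|κ|=k} d_{2κ} (Q_κ(x) P_κ(y) − P_κ(x) Q_κ(y))`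
where `Q_κ = Σ_{|μ|=k+1} A_k[κ,μ] P_μ`. Here `ι s` indexes the partitions of degree `s`. -/
theorem stmt13 {m k : ℕ} (ι : ℕ → Type) [∀ s, Fintype (ι s)]
    (P : ∀ s, ι s → (Fin m → ℝ) → ℝ)
    (d : ∀ s, ι s → ℝ)
    (A : ∀ s, ι s → ι (s + 1) → ℝ)
    (B : ∀ s, ι s → ι s → ℝ)
    (Cm : ∀ s, ι (s + 1) → ι s → ℝ)
    (σ : (Fin m → ℝ) → ℝ) (hσ : σ = fun y => ∑ i, y i)
    (h0 : ∀ κ : ι 0, ∀ y, σ y * P 0 κ y =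
      ∑ μ, A 0 κ μ * P 1 μ y + ∑ κ', B 0 κ κ' * P 0 κ' y)
    (hrec : ∀ s, s + 1 ≤ k → ∀ κ : ι (s + 1), ∀ y, σ y * P (s + 1) κ y =
      ∑ μ, A (s + 1) κ μ * P (s + 2) μ y + ∑ κ', B (s + 1) κ κ' * P (s + 1) κ' y +
        ∑ ν, Cm s κ ν * P s ν y)
    (hB : ∀ s, s ≤ k → ∀ κ κ' : ι s, d s κ * B s κ κ' = d s κ' * B s κ' κ)
    (hC : ∀ s, s + 1 ≤ k → ∀ (κ : ι (s + 1)) (ν : ι s),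
      d (s + 1) κ * Cm s κ ν = d s ν * A s ν κ) :
    ∀ x y : Fin m → ℝ,
      (σ x - σ y) * (∑ s ∈ Finset.range (k + 1), ∑ ν : ι s, d s ν * P s ν x * P s ν y) =
        ∑ κ : ι k, d k κ *
          ((∑ μ, A k κ μ * P (k + 1) μ x) * P k κ y -
            P k κ x * (∑ μ, A k κ μ * P (k + 1) μ y)) := by
  intro x y
  -- reindexed versions of the recurrences, with uniformly written degrees
  have h0' : ∀ κ : ι 0, ∀ y, σ y * P 0 κ y =
      ∑ μ, A 0 κ μ * P (0 + 1) μ y + ∑ κ', B 0 κ κ' * P 0 κ' y := h0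
  have hrec' : ∀ s, s + 1 ≤ k → ∀ κ : ι (s + 1), ∀ y, σ y * P (s + 1) κ y =
      ∑ μ, A (s + 1) κ μ * P (s + 1 + 1) μ y +
        ∑ κ', B (s + 1) κ κ' * P (s + 1) κ' y + ∑ ν, Cm s κ ν * P s ν y := hrec
  -- The "boundary" term at level `s`.
  set F : ℕ → ℝ := fun s => ∑ κ : ι s, d s κ *
      ((∑ μ, A s κ μ * P (s + 1) μ x) * P s κ y -
        P s κ x * (∑ μ, A s κ μ * P (s + 1) μ y)) with hF
  have hFexp : ∀ s, F s = ∑ κ : ι s, ∑ μ : ι (s + 1),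
      d s κ * A s κ μ * (P (s + 1) μ x * P s κ y - P s κ x * P (s + 1) μ y) := by
    intro s
    rw [hF]
    refine Finset.sum_congr rfl fun κ _ => ?_
    rw [mul_sub, Finset.sum_mul, Finset.mul_sum, Finset.mul_sum, Finset.mul_sum,
      ← Finset.sum_sub_distrib]
    exact Finset.sum_congr rfl fun μ _ => by ring
  -- generic expansion of the left-hand side at a fixed level
  have expand : ∀ s, (σ x - σ y) * ∑ ν : ι s, d s ν * P s ν x * P s ν y
      = (∑ ν : ι s, d s ν * ((σ x * P s ν x) * P s ν y))
        - (∑ ν : ι s, d s ν * ((σ y * P s ν y) * P s ν x)) := by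
    intro s
    rw [sub_mul, Finset.mul_sum, Finset.mul_sum]
    congr 1 <;> exact Finset.sum_congr rfl fun ν _ => by ring
  -- the base case
  have base : (σ x - σ y) * ∑ ν : ι 0, d 0 ν * P 0 ν x * P 0 ν y = F 0 := by
    rw [expand 0]
    simp only [h0']
    rw [stmt13_expand2 (d 0) (A 0) (B 0) (fun μ => P (0 + 1) μ x) (fun κ' => P 0 κ' x)
      (fun ν => P 0 ν y)]
    rw [stmt13_expand2 (d 0) (A 0) (B 0) (fun μ => P (0 + 1) μ y) (fun κ' => P 0 κ' y)
      (fun ν => P 0 ν x)]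
    have hBeq : (∑ ν : ι 0, ∑ κ' : ι 0, d 0 ν * B 0 ν κ' * P 0 κ' x * P 0 ν y)
        = ∑ ν : ι 0, ∑ κ' : ι 0, d 0 ν * B 0 ν κ' * P 0 κ' y * P 0 ν x :=
      stmt13_cancelB (d 0) (B 0) (fun a => P 0 a x) (fun a => P 0 a y)
        (hB 0 (Nat.zero_le k))
    have hA0 : (∑ ν : ι 0, ∑ μ : ι (0 + 1), d 0 ν * A 0 ν μ * P (0 + 1) μ x * P 0 ν y)
        - (∑ ν : ι 0, ∑ μ : ι (0 + 1), d 0 ν * A 0 ν μ * P (0 + 1) μ y * P 0 ν x)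
          = F 0 := by
      rw [hFexp 0, ← Finset.sum_sub_distrib]
      refine Finset.sum_congr rfl fun ν _ => ?_
      rw [← Finset.sum_sub_distrib]
      exact Finset.sum_congr rfl fun μ _ => by ring
    linarith [hBeq, hA0]
  -- the inductive step
  have step : ∀ s, s + 1 ≤ k →
      (σ x - σ y) * ∑ ν : ι (s + 1), d (s + 1) ν * P (s + 1) ν x * P (s + 1) ν y
        = F (s + 1) - F s := by
    intro s hs
    rw [expand (s + 1)]
    simp only [hrec' s hs]
    rw [stmt13_expand3 (d (s + 1)) (A (s + 1)) (B (s + 1)) (Cm s)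
      (fun μ => P (s + 1 + 1) μ x) (fun κ' => P (s + 1) κ' x) (fun ρ => P s ρ x)
      (fun ν => P (s + 1) ν y)]
    rw [stmt13_expand3 (d (s + 1)) (A (s + 1)) (B (s + 1)) (Cm s)
      (fun μ => P (s + 1 + 1) μ y) (fun κ' => P (s + 1) κ' y) (fun ρ => P s ρ y)
      (fun ν => P (s + 1) ν x)]
    have hBeq : (∑ ν : ι (s + 1), ∑ κ' : ι (s + 1),
          d (s + 1) ν * B (s + 1) ν κ' * P (s + 1) κ' x * P (s + 1) ν y)
        = ∑ ν : ι (s + 1), ∑ κ' : ι (s + 1),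
          d (s + 1) ν * B (s + 1) ν κ' * P (s + 1) κ' y * P (s + 1) ν x :=
      stmt13_cancelB (d (s + 1)) (B (s + 1)) (fun a => P (s + 1) a x)
        (fun a => P (s + 1) a y) (hB (s + 1) hs)
    have hA : (∑ ν : ι (s + 1), ∑ μ : ι (s + 1 + 1),
          d (s + 1) ν * A (s + 1) ν μ * P (s + 1 + 1) μ x * P (s + 1) ν y)
        - (∑ ν : ι (s + 1), ∑ μ : ι (s + 1 + 1),
          d (s + 1) ν * A (s + 1) ν μ * P (s + 1 + 1) μ y * P (s + 1) ν x)
          = F (s + 1) := by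
      rw [hFexp (s + 1), ← Finset.sum_sub_distrib]
      refine Finset.sum_congr rfl fun ν _ => ?_
      rw [← Finset.sum_sub_distrib]
      exact Finset.sum_congr rfl fun μ _ => by ring
    have e1 : F s = (∑ ν : ι (s + 1), ∑ ρ : ι s,
          d s ρ * A s ρ ν * P s ρ y * P (s + 1) ν x)
        - (∑ ν : ι (s + 1), ∑ ρ : ι s,
          d s ρ * A s ρ ν * P s ρ x * P (s + 1) ν y) := by
      rw [hFexp s, Finset.sum_comm, ← Finset.sum_sub_distrib]
      refine Finset.sum_congr rfl fun ν _ => ?_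
      rw [← Finset.sum_sub_distrib]
      exact Finset.sum_congr rfl fun ρ _ => by ring
    have hCd : (∑ ν : ι (s + 1), ∑ ρ : ι s,
          d (s + 1) ν * Cm s ν ρ * P s ρ x * P (s + 1) ν y)
        - (∑ ν : ι (s + 1), ∑ ρ : ι s,
          d (s + 1) ν * Cm s ν ρ * P s ρ y * P (s + 1) ν x)
          = - F s := by
      simp only [hC s hs]
      rw [e1]
      ring
    linarith [hBeq, hA, hCd]
  -- telescoping
  have tele : ∀ n, n ≤ k →
      ∑ s ∈ Finset.range (n + 1),
        ((σ x - σ y) * ∑ ν : ι s, d s ν * P s ν x * P s ν y) = F n := by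
    intro n
    induction n with
    | zero => intro _; rw [Finset.sum_range_one]; exact base
    | succ n ih =>
      intro h
      rw [Finset.sum_range_succ, ih (Nat.le_of_succ_le h), step n h]
      ring
  rw [Finset.mul_sum]
  rw [tele k le_rfl, hF]
end

section
/- (Telescoping step of Christoffel-Darboux) With notation as above, defining Σ_s(x,y) := (A_s 𝐏_{s+1}(x))^t D_s 𝐏_s(y) − 𝐏_s(x)^t D_s A_s 𝐏_{s+1}(y), one has Σ_s(x,y) − Σ_{s-1}(x,y) = (σ(x) − σ(y))·𝐏_s(x)^t D_s 𝐏_s(y). -/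
lemma stmt14_aux {ι₁ ι₂ : Type*} [Fintype ι₁] [Fintype ι₂]
    (f : ι₁ → ℝ) (g : ι₁ → ι₂ → ℝ) (u v : ι₁ → ℝ) (p q : ι₂ → ℝ) :
    ∑ i, f i * ((∑ j, g i j * p j) * u i - v i * (∑ j, g i j * q j)) =
      ∑ i, ∑ j, f i * g i j * (p j * u i - v i * q j) := by
  refine Finset.sum_congr rfl fun i _ => ?_
  rw [Finset.sum_mul, Finset.mul_sum, ← Finset.sum_sub_distrib, Finset.mul_sum]
  exact Finset.sum_congr rfl fun j _ => by ring

/-- telescoping step of Christoffel–Darboux: with the three-term relation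
`σ 𝐏_s = A_s 𝐏_{s+1} + B_s 𝐏_s + C_s 𝐏_{s-1}` (pointwise in `y ∈ ℝ^m`), the symmetry
`d κ · B[κ,κ'] = d κ' · B[κ',κ]` of `D_s B_s` and `D_s C_s = (D_{s-1} A_{s-1})ᵗ`,
the quantity `Σ_s(x,y) = (A_s 𝐏_{s+1}(x))ᵗ D_s 𝐏_s(y) − 𝐏_s(x)ᵗ D_s A_s 𝐏_{s+1}(y)`
satisfies `Σ_s(x,y) − Σ_{s-1}(x,y) = (σ(x) − σ(y))·𝐏_s(x)ᵗ D_s 𝐏_s(y)`. Here `ικ, ιμ, ιν`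
index the partitions of degree `s`, `s+1`, `s−1` respectively, `Asm = A_{s-1}`,
`d` (resp. `dp`) the diagonal entries of `D_s` (resp. `D_{s-1}`). -/
theorem stmt14 {m : ℕ} {ικ ιμ ιν : Type*} [Fintype ικ] [Fintype ιμ] [Fintype ιν]
    (Ps : ικ → (Fin m → ℝ) → ℝ) (Psp : ιμ → (Fin m → ℝ) → ℝ) (Psm : ιν → (Fin m → ℝ) → ℝ)
    (As : ικ → ιμ → ℝ) (Bs : ικ → ικ → ℝ) (Cs : ικ → ιν → ℝ) (Asm : ιν → ικ → ℝ)
    (d : ικ → ℝ) (dp : ιν → ℝ)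
    (σ : (Fin m → ℝ) → ℝ) (hσ : σ = fun y => ∑ i, y i)
    (h3 : ∀ κ y, σ y * Ps κ y =
      ∑ μ, As κ μ * Psp μ y + ∑ κ', Bs κ κ' * Ps κ' y + ∑ ν, Cs κ ν * Psm ν y)
    (hB : ∀ κ κ', d κ * Bs κ κ' = d κ' * Bs κ' κ)
    (hC : ∀ κ ν, d κ * Cs κ ν = dp ν * Asm ν κ) :
    ∀ x y : Fin m → ℝ,
      (∑ κ, d κ * ((∑ μ, As κ μ * Psp μ x) * Ps κ y -
          Ps κ x * (∑ μ, As κ μ * Psp μ y))) -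
        (∑ ν, dp ν * ((∑ κ, Asm ν κ * Ps κ x) * Psm ν y -
          Psm ν x * (∑ κ, Asm ν κ * Ps κ y))) =
      (σ x - σ y) * ∑ κ, d κ * Ps κ x * Ps κ y := by
  intro x y
  have hA : ∀ κ (z : Fin m → ℝ), (∑ μ, As κ μ * Psp μ z) =
      σ z * Ps κ z - (∑ κ', Bs κ κ' * Ps κ' z) - (∑ ν, Cs κ ν * Psm ν z) := by
    intro κ z
    have := h3 κ z
    linarith
  -- decompose the A-sum
  have e1 : (∑ κ, d κ * ((∑ μ, As κ μ * Psp μ x) * Ps κ y -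
        Ps κ x * (∑ μ, As κ μ * Psp μ y))) =
      (σ x - σ y) * (∑ κ, d κ * Ps κ x * Ps κ y)
      - (∑ κ, d κ * ((∑ κ', Bs κ κ' * Ps κ' x) * Ps κ y -
          Ps κ x * (∑ κ', Bs κ κ' * Ps κ' y)))
      - (∑ κ, d κ * ((∑ ν, Cs κ ν * Psm ν x) * Ps κ y -
          Ps κ x * (∑ ν, Cs κ ν * Psm ν y))) := by
    simp only [hA]
    rw [Finset.mul_sum, ← Finset.sum_sub_distrib, ← Finset.sum_sub_distrib]
    exact Finset.sum_congr rfl fun κ _ => by ring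
  -- the B-part vanishes by the symmetry hB
  have eB : (∑ κ, d κ * ((∑ κ', Bs κ κ' * Ps κ' x) * Ps κ y -
      Ps κ x * (∑ κ', Bs κ κ' * Ps κ' y))) = 0 := by
    rw [stmt14_aux]
    have hskew : (∑ κ, ∑ κ', d κ * Bs κ κ' * (Ps κ' x * Ps κ y - Ps κ x * Ps κ' y)) =
        - (∑ κ, ∑ κ', d κ * Bs κ κ' * (Ps κ' x * Ps κ y - Ps κ x * Ps κ' y)) := by
      nth_rewrite 1 [Finset.sum_comm]
      rw [← Finset.sum_neg_distrib]
      refine Finset.sum_congr rfl fun κ _ => ?_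
      rw [← Finset.sum_neg_distrib]
      refine Finset.sum_congr rfl fun κ' _ => ?_
      rw [hB κ' κ]
      ring
    linarith
  -- the C-part matches the ν-sum via hC
  have eC : (∑ κ, d κ * ((∑ ν, Cs κ ν * Psm ν x) * Ps κ y -
        Ps κ x * (∑ ν, Cs κ ν * Psm ν y))) =
      - (∑ ν, dp ν * ((∑ κ, Asm ν κ * Ps κ x) * Psm ν y -
          Psm ν x * (∑ κ, Asm ν κ * Ps κ y))) := by
    rw [stmt14_aux, stmt14_aux, Finset.sum_comm, ← Finset.sum_neg_distrib]
    refine Finset.sum_congr rfl fun ν _ => ?_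
    rw [← Finset.sum_neg_distrib]
    refine Finset.sum_congr rfl fun κ _ => ?_
    rw [hC κ ν]
    ring
  rw [e1, eB, eC]
  ring
end

section
/- (Perturbed eigenvalue monotonicity) Let J be a real symmetric N×N matrix such that J + M·Id is nonnegative and irreducible for some M, and let E be a nonnegative diagonal matrix, E ≠ 0, whose support is contained in the index set. Then the largest eigenvalue of J − E is strictly less than the largest eigenvalue of J. -/
/-!
Let `v` be an eigenvector of `J - E` for `λ₂`. Since `J + M·Id` is entrywise nonnegative,
`|v|` has Rayleigh quotient for `J` at least that of `v`, hence
`λ₂ ‖v‖² = vᵀJv - vᵀEv ≤ |v|ᵀJ|v| - vᵀEv ≤ λ₁ ‖v‖² - vᵀEv`.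
If `λ₁ ≤ λ₂`, all of these are equalities: `vᵀEv = 0`, so `v` vanishes wherever `E` does not,
and `|v|` maximises the Rayleigh quotient of `J`, so it is a nonnegative eigenvector of
`J + M·Id`. By irreducibility, a nonnegative eigenvector with a zero entry is zero.
-/

/-- A square real matrix is irreducible if the directed graph with an edge `i → j` whenever
`A i j > 0` is strongly connected. -/
def Matrix.IsIrreducible' {N : ℕ} (A : Matrix (Fin N) (Fin N) ℝ) : Prop :=
  ∀ i j : Fin N, Relation.TransGen (fun a b => 0 < A a b) i j

open Matrix

namespace Matrix

variable {n : Type*} [Fintype n]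

section Spectrum

variable {K : Type*} [Field K] [DecidableEq n]

lemma exists_mulVec_eq_smul_of_mem_spectrum {A : Matrix n n K} {μ : K}
    (hμ : μ ∈ spectrum K A) : ∃ v ≠ 0, A *ᵥ v = μ • v := by
  rw [← spectrum_toLin', ← Module.End.hasEigenvalue_iff_mem_spectrum] at hμ
  obtain ⟨v, hv⟩ := hμ.exists_hasEigenvector
  exact ⟨v, hv.2, by simpa using hv.apply_eq_smul⟩

end Spectrum

section Rayleigh

variable [DecidableEq n] {J : Matrix n n ℝ} {c : ℝ}

lemma IsHermitian.posSemidef_smul_one_sub (hJ : J.IsHermitian)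
    (hc : ∀ μ ∈ spectrum ℝ J, μ ≤ c) : (c • (1 : Matrix n n ℝ) - J).PosSemidef := by
  rw [posSemidef_iff_isHermitian_and_spectrum_nonneg]
  refine ⟨(isHermitian_one.smul (IsSelfAdjoint.all c)).sub hJ, ?_⟩
  rw [← Algebra.algebraMap_eq_smul_one, ← spectrum.singleton_sub_eq]
  rintro _ ⟨_, rfl, μ, hμ, rfl⟩
  exact sub_nonneg.mpr (hc μ hμ)

lemma dotProduct_smul_one_sub_mulVec (x : n → ℝ) :
    x ⬝ᵥ (c • (1 : Matrix n n ℝ) - J) *ᵥ x = c * (x ⬝ᵥ x) - x ⬝ᵥ J *ᵥ x := by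
  rw [sub_mulVec, smul_mulVec, one_mulVec, dotProduct_sub, dotProduct_smul, smul_eq_mul]

lemma IsHermitian.dotProduct_mulVec_le (hJ : J.IsHermitian)
    (hc : ∀ μ ∈ spectrum ℝ J, μ ≤ c) (x : n → ℝ) : x ⬝ᵥ J *ᵥ x ≤ c * (x ⬝ᵥ x) := by
  have := (hJ.posSemidef_smul_one_sub hc).dotProduct_mulVec_nonneg x
  rw [star_trivial, dotProduct_smul_one_sub_mulVec] at this
  linarith

lemma IsHermitian.mulVec_eq_smul_of_dotProduct_mulVec_eq (hJ : J.IsHermitian)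
    (hc : ∀ μ ∈ spectrum ℝ J, μ ≤ c) {x : n → ℝ} (hx : x ⬝ᵥ J *ᵥ x = c * (x ⬝ᵥ x)) :
    J *ᵥ x = c • x := by
  have := ((hJ.posSemidef_smul_one_sub hc).dotProduct_mulVec_zero_iff x).mp
    (by rw [star_trivial, dotProduct_smul_one_sub_mulVec, hx, sub_self])
  rw [sub_mulVec, smul_mulVec, one_mulVec, sub_eq_zero] at this
  exact this.symm

end Rayleigh

section Nonneg

lemma dotProduct_mulVec_le_abs {A : Matrix n n ℝ} (hA : ∀ i j, 0 ≤ A i j) (v : n → ℝ) :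
    v ⬝ᵥ A *ᵥ v ≤ |v| ⬝ᵥ A *ᵥ |v| := by
  simp only [dotProduct, mulVec, Finset.mul_sum, Pi.abs_apply]
  refine Finset.sum_le_sum fun i _ => Finset.sum_le_sum fun j _ => ?_
  calc v i * (A i j * v j) ≤ |v i * (A i j * v j)| := le_abs_self _
    _ = |v i| * (A i j * |v j|) := by rw [abs_mul, abs_mul, abs_of_nonneg (hA i j)]

lemma abs_dotProduct_abs (v : n → ℝ) : |v| ⬝ᵥ |v| = v ⬝ᵥ v := by
  simp only [dotProduct, Pi.abs_apply, abs_mul_abs_self]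

lemma dotProduct_mulVec_le_abs_of_nonneg_add_smul_one [DecidableEq n] {J : Matrix n n ℝ}
    {M : ℝ} (hnn : ∀ i j, 0 ≤ (J + M • (1 : Matrix n n ℝ)) i j) (v : n → ℝ) :
    v ⬝ᵥ J *ᵥ v ≤ |v| ⬝ᵥ J *ᵥ |v| := by
  have := dotProduct_mulVec_le_abs hnn v
  simp only [add_mulVec, smul_mulVec, one_mulVec, dotProduct_add, dotProduct_smul,
    abs_dotProduct_abs] at this
  linarith

end Nonneg

section Diagonal

variable [DecidableEq n]

lemma dotProduct_diagonal_mulVec_self (ε v : n → ℝ) :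
    v ⬝ᵥ diagonal ε *ᵥ v = ∑ i, ε i * v i ^ 2 := by
  simp only [dotProduct, mulVec_diagonal]
  exact Finset.sum_congr rfl fun i _ => by ring

lemma dotProduct_diagonal_mulVec_self_nonneg {ε : n → ℝ} (hε : ∀ i, 0 ≤ ε i) (v : n → ℝ) :
    0 ≤ v ⬝ᵥ diagonal ε *ᵥ v := by
  rw [dotProduct_diagonal_mulVec_self]
  exact Finset.sum_nonneg fun i _ => mul_nonneg (hε i) (sq_nonneg (v i))

lemma apply_eq_zero_of_dotProduct_diagonal_mulVec_self_nonpos {ε : n → ℝ} (hε : ∀ i, 0 ≤ ε i)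
    {v : n → ℝ} (hv : v ⬝ᵥ diagonal ε *ᵥ v ≤ 0) {i : n} (hi : ε i ≠ 0) : v i = 0 := by
  have hterms : ∀ j ∈ Finset.univ, 0 ≤ ε j * v j ^ 2 := fun j _ => mul_nonneg (hε j) (sq_nonneg _)
  rw [dotProduct_diagonal_mulVec_self] at hv
  have := (Finset.sum_eq_zero_iff_of_nonneg hterms).mp (hv.antisymm (Finset.sum_nonneg hterms)) i
    (Finset.mem_univ i)
  exact pow_eq_zero_iff two_ne_zero |>.mp ((mul_eq_zero.mp this).resolve_left hi)

end Diagonal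

end Matrix

lemma Matrix.IsIrreducible'.eq_zero_of_mulVec_eq_smul {N : ℕ} {A : Matrix (Fin N) (Fin N) ℝ}
    (hirr : A.IsIrreducible') (hA : ∀ i j, 0 ≤ A i j) {u : Fin N → ℝ} (hu : 0 ≤ u) {r : ℝ}
    (hAu : A *ᵥ u = r • u) {i : Fin N} (hi : u i = 0) : u = 0 := by
  have step : ∀ j l, u j = 0 → 0 < A j l → u l = 0 := by
    intro j l hj hjl
    have hsum : ∑ m, A j m * u m = 0 := by
      simpa [mulVec, dotProduct, hj] using congrFun hAu j
    have := (Finset.sum_eq_zero_iff_of_nonneg fun m _ => mul_nonneg (hA j m) (hu m)).mp hsum l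
      (Finset.mem_univ l)
    exact (mul_eq_zero.mp this).resolve_left hjl.ne'
  funext k
  induction hirr i k with
  | single h => exact step _ _ hi h
  | tail _ h ih => exact step _ _ ih h

theorem stmt16_general {N : ℕ} (J : Matrix (Fin N) (Fin N) ℝ) (hsym : J.IsSymm)
    (M : ℝ)
    (hnn : ∀ i j, 0 ≤ (J + M • (1 : Matrix (Fin N) (Fin N) ℝ)) i j)
    (hirr : (J + M • (1 : Matrix (Fin N) (Fin N) ℝ)).IsIrreducible')
    (ε : Fin N → ℝ) (hε : ∀ i, 0 ≤ ε i) (hεne : ε ≠ 0)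
    (lam1 : ℝ)
    (h1max : ∀ μ ∈ spectrum ℝ J, μ ≤ lam1)
    (lam2 : ℝ) (h2mem : lam2 ∈ spectrum ℝ (J - Matrix.diagonal ε)) :
    lam2 < lam1 := by
  have hJ : J.IsHermitian := isHermitian_iff_isSymm.mpr hsym
  obtain ⟨v, hv0, hv⟩ := exists_mulVec_eq_smul_of_mem_spectrum h2mem
  obtain ⟨i, hi : ε i ≠ 0⟩ := Function.ne_iff.mp hεne
  by_contra! hle
  have hsplit : lam2 * (v ⬝ᵥ v) = v ⬝ᵥ J *ᵥ v - v ⬝ᵥ diagonal ε *ᵥ v := by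
    rw [← dotProduct_sub, ← sub_mulVec, hv, dotProduct_smul, smul_eq_mul]
  have habs := dotProduct_mulVec_le_abs_of_nonneg_add_smul_one hnn v
  have hray := abs_dotProduct_abs v ▸ hJ.dotProduct_mulVec_le h1max |v|
  have hvv : lam1 * (v ⬝ᵥ v) ≤ lam2 * (v ⬝ᵥ v) :=
    mul_le_mul_of_nonneg_right hle (Finset.sum_nonneg fun j _ => mul_self_nonneg (v j))
  have hE := dotProduct_diagonal_mulVec_self_nonneg hε v
  have hvi : v i = 0 :=
    apply_eq_zero_of_dotProduct_diagonal_mulVec_self_nonpos hε (by linarith) hi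
  have hJv : J *ᵥ |v| = lam1 • |v| :=
    hJ.mulVec_eq_smul_of_dotProduct_mulVec_eq h1max (by rw [abs_dotProduct_abs]; linarith)
  have hAv : (J + M • (1 : Matrix (Fin N) (Fin N) ℝ)) *ᵥ |v| = (lam1 + M) • |v| := by
    rw [add_mulVec, smul_mulVec, one_mulVec, hJv, add_smul]
  have := hirr.eq_zero_of_mulVec_eq_smul hnn (abs_nonneg v) hAv (i := i) (by simp [hvi])
  exact hv0 (funext fun j => abs_eq_zero.mp (congrFun this j))

/-- perturbed eigenvalue monotonicity: if `J` is real symmetric with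
`J + M·Id` entrywise nonnegative and irreducible, and `E = diagonal ε` is a nonzero
nonnegative diagonal matrix, then the largest eigenvalue of `J − E` is strictly smaller
than the largest eigenvalue of `J`. -/
theorem stmt16 {N : ℕ} (J : Matrix (Fin N) (Fin N) ℝ) (hsym : J.IsSymm)
    (M : ℝ)
    (hnn : ∀ i j, 0 ≤ (J + M • (1 : Matrix (Fin N) (Fin N) ℝ)) i j)
    (hirr : (J + M • (1 : Matrix (Fin N) (Fin N) ℝ)).IsIrreducible')
    (ε : Fin N → ℝ) (hε : ∀ i, 0 ≤ ε i) (hεne : ε ≠ 0)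
    (lam1 : ℝ) (h1mem : lam1 ∈ spectrum ℝ J)
    (h1max : ∀ μ ∈ spectrum ℝ J, μ ≤ lam1)
    (lam2 : ℝ) (h2mem : lam2 ∈ spectrum ℝ (J - Matrix.diagonal ε))
    (h2max : ∀ μ ∈ spectrum ℝ (J - Matrix.diagonal ε), μ ≤ lam2) :
    lam2 < lam1 :=
  stmt16_general J hsym M hnn hirr ε hε hεne lam1 h1max lam2 h2mem
end

section
/- The number of partitions κ = (κ_1 ≥ ... ≥ κ_m ≥ 0) of degree |κ| = 2k with at most m parts, weighted by dim F_n^κ = Π_{1≤i<j≤n}(κ_i − κ_j + j − i)/(j − i) (extending κ by zeros to n parts), satisfies Σ_{|κ|=2k, ℓ(κ)≤m} dim F_n^κ ≤ (2k+1)^{m²} · binomial(n+2k, 2k)^m. -/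
open scoped Classical

/-- Extension of a partition with at most `m` parts to `n` parts by appending zeros. -/
def extPart (m n : ℕ) (κ : Fin m → ℕ) (i : Fin n) : ℕ :=
  if h : (i : ℕ) < m then κ ⟨i, h⟩ else 0

/-- Weyl dimension formula for `GL(n,ℝ)`:
`dim F_n^κ = Π_{1 ≤ i < j ≤ n} (κ_i − κ_j + j − i)/(j − i)`, with `κ` extended by zeros. -/
noncomputable def dimF (m n : ℕ) (κ : Fin m → ℕ) : ℝ :=
  ∏ i : Fin n, ∏ j : Fin n,
    if (i : ℕ) < (j : ℕ) then
      (((extPart m n κ i : ℝ) - (extPart m n κ j : ℝ) + ((j : ℕ) : ℝ) - ((i : ℕ) : ℝ)) /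
        (((j : ℕ) : ℝ) - ((i : ℕ) : ℝ)))
    else 1

/-- The set of partitions `κ_1 ≥ ... ≥ κ_m ≥ 0` of degree `2k` with at most `m` parts. -/
noncomputable def partitionSet (m k : ℕ) : Finset (Fin m → ℕ) :=
  (Fintype.piFinset fun _ : Fin m => Finset.range (2 * k + 1)).filter
    fun κ => (∀ i j : Fin m, i ≤ j → κ j ≤ κ i) ∧ ∑ i, κ i = 2 * k

/-! Each Weyl factor `(κ_i − κ_j + j − i)/(j − i)` is at most `(κ_i + j − i)/(j − i)`,
and the product of the latter over `i < j < n` is the binomial coefficient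
`C(κ_i + n − 1 − i, n − 1 − i) ≤ C(n + 2k, 2k)`. Rows `i ≥ m` have `κ_i = 0` and
contribute `1`, so `dim F_n^κ ≤ C(n + 2k, 2k)^m`; there are at most `(2k+1)^m` partitions
to sum over. -/

open Finset

theorem prod_range_ite_add_div_sub_eq_choose (t i n : ℕ) :
    ∏ j ∈ range n, (if i < j then ((t : ℝ) + j - i) / (j - i) else 1) =
      ((t + (n - 1 - i)).choose (n - 1 - i) : ℝ) := by
  induction n with
  | zero => simp
  | succ n ih =>
    rw [prod_range_succ, ih]
    split_ifs with hin
    · obtain ⟨N, rfl⟩ : ∃ N, n = i + N + 1 := ⟨n - i - 1, by omega⟩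
      have hnum : (t : ℝ) + ((i + N + 1 : ℕ) : ℝ) - i = ((t + N + 1 : ℕ) : ℝ) := by
        push_cast; ring
      have hden : ((i + N + 1 : ℕ) : ℝ) - i = ((N + 1 : ℕ) : ℝ) := by push_cast; ring
      rw [show i + N + 1 - 1 - i = N by omega, show i + N + 1 + 1 - 1 - i = N + 1 by omega, hnum,
        hden, mul_div_assoc', div_eq_iff (by positivity), mul_comm]
      exact_mod_cast Nat.add_one_mul_choose_eq (t + N) N
    · rw [mul_one, show n + 1 - 1 - i = n - 1 - i by omega]

theorem weyl_factor_nonneg {a b i j : ℕ} (hij : i < j) (hba : b ≤ a) :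
    0 ≤ ((a : ℝ) - b + j - i) / (j - i) := by
  have hij' : (i : ℝ) < j := by exact_mod_cast hij
  have hba' : (b : ℝ) ≤ a := by exact_mod_cast hba
  apply div_nonneg <;> linarith

theorem weyl_factor_le {a b i j : ℕ} (hij : i < j) :
    ((a : ℝ) - b + j - i) / (j - i) ≤ ((a : ℝ) + j - i) / (j - i) := by
  have hij' : (i : ℝ) < j := by exact_mod_cast hij
  gcongr
  linarith

theorem prod_weyl_factor_le_prod_choose {n : ℕ} (e : Fin n → ℕ) (he : Antitone e) :
    ∏ i : Fin n, ∏ j : Fin n,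
      (if (i : ℕ) < j then ((e i : ℝ) - e j + (j : ℕ) - (i : ℕ)) / ((j : ℕ) - (i : ℕ))
        else 1) ≤
      ∏ i : Fin n, ((e i + (n - 1 - i)).choose (n - 1 - i) : ℝ) := by
  refine prod_le_prod (fun i _ => prod_nonneg fun j _ => ?_) fun i _ => ?_
  · split_ifs with hij
    · exact weyl_factor_nonneg hij (he hij.le)
    · exact zero_le_one
  calc _ ≤ ∏ j : Fin n,
          (if (i : ℕ) < j then ((e i : ℝ) + (j : ℕ) - (i : ℕ)) / ((j : ℕ) - (i : ℕ))
            else 1) := by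
        refine prod_le_prod (fun j _ => ?_) fun j _ => ?_ <;> split_ifs with hij
        exacts [weyl_factor_nonneg hij (he hij.le), zero_le_one, weyl_factor_le hij, le_rfl]
    _ = ∏ j ∈ range n, (if (i : ℕ) < j then ((e i : ℝ) + j - i) / (j - i) else 1) :=
        Fin.prod_univ_eq_prod_range
          (fun j => if (i : ℕ) < j then ((e i : ℝ) + j - i) / (j - i) else 1) n
    _ = _ := prod_range_ite_add_div_sub_eq_choose (e i) i n

theorem choose_add_le_choose_add {s t N n : ℕ} (hst : s ≤ t) (hNn : N ≤ n) :
    (s + N).choose N ≤ (n + t).choose t :=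
  calc (s + N).choose N ≤ (t + N).choose N := Nat.choose_le_choose N (by omega)
    _ = (t + N).choose t := Nat.choose_symm_add.symm
    _ ≤ (n + t).choose t := Nat.choose_le_choose t (by omega)

section extPart

variable {m n : ℕ} {κ : Fin m → ℕ}

theorem antitone_extPart (hκ : Antitone κ) : Antitone (extPart m n κ) := by
  intro i j hij
  unfold extPart
  split_ifs
  · exact hκ hij
  · omega
  · exact Nat.zero_le _
  · exact le_rfl

theorem extPart_le {b : ℕ} (hb : ∀ i, κ i ≤ b) (i : Fin n) : extPart m n κ i ≤ b := by
  unfold extPart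
  split_ifs
  exacts [hb _, Nat.zero_le b]

theorem extPart_eq_zero {i : Fin n} (hi : m ≤ i) : extPart m n κ i = 0 :=
  dif_neg (by omega)

theorem dimF_le_choose_pow (hκ : Antitone κ) {b : ℕ} (hb : ∀ i, κ i ≤ b) :
    dimF m n κ ≤ ((n + b).choose b : ℝ) ^ m := by
  set C : ℝ := ((n + b).choose b : ℝ)
  have hC : 1 ≤ C := Nat.one_le_cast.mpr (Nat.choose_pos (Nat.le_add_left b n))
  calc dimF m n κ ≤ ∏ i : Fin n,
        ((extPart m n κ i + (n - 1 - i)).choose (n - 1 - i) : ℝ) :=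
        prod_weyl_factor_le_prod_choose _ (antitone_extPart hκ)
    _ ≤ ∏ i : Fin n, if (i : ℕ) < m then C else 1 := by
        refine prod_le_prod (fun i _ => Nat.cast_nonneg _) fun i _ => ?_
        split_ifs with hi
        · exact Nat.cast_le.mpr
            (choose_add_le_choose_add (extPart_le hb i) (Nat.sub_le_of_le_add (by omega)))
        · simp [extPart_eq_zero (not_lt.mp hi)]
    _ = C ^ #{i : Fin n | (i : ℕ) < m} := by
        rw [prod_ite, prod_const, prod_const_one, mul_one]
    _ ≤ C ^ m := pow_le_pow_right₀ hC (by rw [Fin.card_filter_val_lt]; exact min_le_right n m)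

end extPart

theorem card_partitionSet_le (m k : ℕ) : #(partitionSet m k) ≤ (2 * k + 1) ^ m :=
  (card_filter_le _ _).trans (by simp)

theorem stmt17_general (m n k : ℕ) :
    ∑ κ ∈ partitionSet m k, dimF m n κ ≤
      ((2 * (k : ℝ) + 1)) ^ (m ^ 2) * ((n + 2 * k).choose (2 * k) : ℝ) ^ m := by
  have hdim : ∀ κ ∈ partitionSet m k,
      dimF m n κ ≤ ((n + 2 * k).choose (2 * k) : ℝ) ^ m := by
    intro κ hκ
    simp only [partitionSet, mem_filter, Fintype.mem_piFinset, mem_range] at hκ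
    exact dimF_le_choose_pow hκ.2.1 fun i => Nat.lt_succ_iff.mp (hκ.1 i)
  calc ∑ κ ∈ partitionSet m k, dimF m n κ
      ≤ #(partitionSet m k) * ((n + 2 * k).choose (2 * k) : ℝ) ^ m := by
        simpa using sum_le_card_nsmul _ _ _ hdim
    _ ≤ (2 * (k : ℝ) + 1) ^ m * ((n + 2 * k).choose (2 * k) : ℝ) ^ m := by
        gcongr
        exact_mod_cast card_partitionSet_le m k
    _ ≤ (2 * (k : ℝ) + 1) ^ (m ^ 2) * ((n + 2 * k).choose (2 * k) : ℝ) ^ m := by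
        gcongr
        · linarith [k.cast_nonneg (α := ℝ)]
        · exact Nat.le_self_pow two_ne_zero m

/-- `Σ_{|κ|=2k, ℓ(κ)≤m} dim F_n^κ ≤ (2k+1)^{m²} · C(n+2k, 2k)^m`. -/
theorem stmt17 (m n k : ℕ) (hm : 1 ≤ m) (hmn : m ≤ n) :
    ∑ κ ∈ partitionSet m k, dimF m n κ ≤
      ((2 * (k : ℝ) + 1)) ^ (m ^ 2) * ((n + 2 * k).choose (2 * k) : ℝ) ^ m :=
  stmt17_general m n k
end

section
/- (Asymptotics of the largest eigenvalue, rank-one case m=1) Let b_s = (1/2)(1 − (n−2)(n−4)/((4s+n)(4s+n−4))) and a'_s = sqrt((2s+1)(2s+2)(2s+n−2)(2s+n−1)/((4s+n−2)(4s+n)²(4s+n+2))), and let J'_k be the (k+1)×(k+1) symmetric tridiagonal matrix with diagonal entries b_0,...,b_k and off-diagonal entries a'_0,...,a'_{k-1}. If n/(2k) → ℓ > 0 as n, k → ∞, the largest eigenvalue of J'_k converges to 4(ℓ+1)/(ℓ+2)². -/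
open Filter

/-- Diagonal entry `b_s = (1/2)(1 − (n−2)(n−4)/((4s+n)(4s+n−4)))`. -/
noncomputable def bcoef (n s : ℕ) : ℝ :=
  (1 / 2) * (1 - ((n : ℝ) - 2) * ((n : ℝ) - 4) /
    ((4 * (s : ℝ) + n) * (4 * (s : ℝ) + n - 4)))

/-- Off-diagonal entry
`a'_s = sqrt((2s+1)(2s+2)(2s+n−2)(2s+n−1)/((4s+n−2)(4s+n)²(4s+n+2)))`. -/
noncomputable def acoef (n s : ℕ) : ℝ :=
  Real.sqrt ((2 * (s : ℝ) + 1) * (2 * (s : ℝ) + 2) * (2 * (s : ℝ) + n - 2) *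
      (2 * (s : ℝ) + n - 1) /
    ((4 * (s : ℝ) + n - 2) * (4 * (s : ℝ) + n) ^ 2 * (4 * (s : ℝ) + n + 2)))

/-- The symmetric tridiagonal Jacobi matrix `J'_k` of size `(k+1) × (k+1)` with diagonal
entries `b_0, ..., b_k` and off-diagonal entries `a'_0, ..., a'_{k-1}`. -/
noncomputable def Jmat (n k : ℕ) : Matrix (Fin (k + 1)) (Fin (k + 1)) ℝ :=
  fun i j =>
    if (i : ℕ) = (j : ℕ) then bcoef n i
    else if (j : ℕ) = (i : ℕ) + 1 then acoef n i
    else if (i : ℕ) = (j : ℕ) + 1 then acoef n j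
    else 0

/-- The largest eigenvalue of `J'_k`. -/
noncomputable def maxEig (n k : ℕ) : ℝ := sSup (spectrum ℝ (Jmat n k))

/-!
`J'_k` is symmetric with nonnegative entries, and `b_s`, `a'_s` increase in `s`. So its largest
eigenvalue is at most the largest row sum, hence at most `b_k + 2 a'_k`, and at least the Rayleigh
quotient of the indicator of the last `r + 1` indices, which is at least
`(r - 1)/(r + 1) · (b_{k-r} + 2 a'_{k-r})`. Taking `r = ⌊√k⌋`, the factor `(r - 1)/(r + 1)` tends
to `1` while `(k - r)/k → 1`. Both coefficients are continuous functions of `n / D` and `1 / D`,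
`D = 4s + n`; when `s / k → 1` we have `n / D → c = ℓ / (2 + ℓ)`, so `b_s → (1 - c²)/2` and
`a'_s → (1 - c²)/4`, and both bounds tend to `1 - c² = 4(ℓ+1)/(ℓ+2)²`.
-/

open Matrix Topology

section Spectrum

variable {ι : Type*} [Fintype ι] [DecidableEq ι]

open scoped MatrixOrder in
theorem Matrix.IsHermitian.dotProduct_mulVec_le_sSup_spectrum {A : Matrix ι ι ℝ}
    (hA : A.IsHermitian) (x : ι → ℝ) :
    x ⬝ᵥ A *ᵥ x ≤ sSup (spectrum ℝ A) * (x ⬝ᵥ x) := by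
  have hle : A ≤ algebraMap ℝ (Matrix ι ι ℝ) (sSup (spectrum ℝ A)) :=
    le_algebraMap_of_spectrum_le (fun μ hμ => le_csSup A.finite_real_spectrum.bddAbove hμ)
      hA.isSelfAdjoint
  have hquad := (Matrix.le_iff.mp hle).dotProduct_mulVec_nonneg x
  rw [sub_mulVec, dotProduct_sub, Algebra.algebraMap_eq_smul_one, smul_mulVec, one_mulVec,
    dotProduct_smul, smul_eq_mul] at hquad
  simpa using hquad

attribute [local instance] Matrix.linftyOpNormedAlgebra Matrix.linftyOpNormedRing in
theorem Matrix.sSup_spectrum_le_of_sum_abs_le [Nonempty ι] {A : Matrix ι ι ℝ} {c : ℝ}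
    (h : ∀ i, ∑ j, |A i j| ≤ c) : sSup (spectrum ℝ A) ≤ c := by
  have hc : 0 ≤ c :=
    (Finset.sum_nonneg fun j _ => abs_nonneg _).trans (h (Classical.arbitrary ι))
  have hA : ‖A‖ ≤ c := by
    suffices ‖A‖₊ ≤ c.toNNReal by simpa [← NNReal.coe_le_coe, hc] using this
    rw [linfty_opNNNorm_def]
    refine Finset.sup_le fun i _ => ?_
    rw [← NNReal.coe_le_coe, NNReal.coe_sum, Real.coe_toNNReal _ hc]
    simpa using h i
  exact Real.sSup_le (fun μ hμ => (le_abs_self μ).trans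
    ((spectrum.norm_le_norm_of_mem hμ).trans hA)) hc

end Spectrum

theorem Fin.sum_ite_val_eq {M : Type*} [AddCommMonoid M] {m c : ℕ} (v : M) :
    ∑ j : Fin m, (if (j : ℕ) = c then v else 0) = if c < m then v else 0 := by
  rw [Fin.sum_univ_eq_sum_range (fun j => if j = c then v else 0), Finset.sum_ite_eq']
  simp only [Finset.mem_range]

theorem Fin.sum_ite_val_mem_Ico {R : Type*} [NonAssocSemiring R] {m a b : ℕ} (hb : b ≤ m)
    (v : R) :
    ∑ i : Fin m, (if (i : ℕ) ∈ Finset.Ico a b then v else 0) = (b - a : ℕ) * v := by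
  rw [Fin.sum_univ_eq_sum_range (fun i => if i ∈ Finset.Ico a b then v else 0),
    Finset.sum_ite_mem, Finset.inter_eq_right.mpr, Finset.sum_const, Nat.card_Ico, nsmul_eq_mul]
  exact fun i hi => Finset.mem_range.mpr ((Finset.mem_Ico.mp hi).2.trans_le hb)

section Coefficients

variable {n : ℕ}

theorem bcoef_nonneg (hn : 5 ≤ n) (s : ℕ) : 0 ≤ bcoef n s := by
  have hN : (5 : ℝ) ≤ n := by exact_mod_cast hn
  have hS : (0 : ℝ) ≤ s := s.cast_nonneg
  have hpos : 0 < (4 * (s : ℝ) + n) * (4 * s + n - 4) := by nlinarith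
  have hle : ((n : ℝ) - 2) * (n - 4) ≤ (4 * (s : ℝ) + n) * (4 * s + n - 4) := by nlinarith
  have := div_le_one_of_le₀ hle hpos.le
  unfold bcoef
  linarith

theorem bcoef_mono (hn : 5 ≤ n) : Monotone (bcoef n) := by
  intro s t hst
  have hN : (5 : ℝ) ≤ n := by exact_mod_cast hn
  have hS : (0 : ℝ) ≤ s := s.cast_nonneg
  have hST : (s : ℝ) ≤ t := by exact_mod_cast hst
  have hpos : 0 < (4 * (s : ℝ) + n) * (4 * s + n - 4) := by nlinarith
  have hle : (4 * (s : ℝ) + n) * (4 * s + n - 4) ≤ (4 * (t : ℝ) + n) * (4 * t + n - 4) := by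
    nlinarith
  have hp : (0 : ℝ) ≤ ((n : ℝ) - 2) * (n - 4) := by nlinarith
  have := div_le_div_of_nonneg_left hp hpos hle
  unfold bcoef
  linarith

theorem acoef_nonneg (n s : ℕ) : 0 ≤ acoef n s := Real.sqrt_nonneg _

/-- With `D = 4s + n`: `4(2s+1)(2s+n-1) = D² - (n-2)²` and `4(2s+2)(2s+n-2) = D² - (n-4)²`. -/
theorem acoef_eq_sqrt (hn : 3 ≤ n) (s : ℕ) :
    acoef n s = √((1 - (((n : ℝ) - 2) ^ 2 - 4) / ((4 * s + n) ^ 2 - 4)) *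
      (1 - ((n : ℝ) - 4) ^ 2 / (4 * s + n) ^ 2) / 16) := by
  have hN : (3 : ℝ) ≤ n := by exact_mod_cast hn
  have hS : (0 : ℝ) ≤ s := s.cast_nonneg
  have h1 : (4 * (s : ℝ) + n - 2) ≠ 0 := by linarith
  have h2 : (4 * (s : ℝ) + n) ≠ 0 := by linarith
  have h3 : (4 * (s : ℝ) + n + 2) ≠ 0 := by linarith
  have h4 : (4 * (s : ℝ) + n) ^ 2 - 4 ≠ 0 := by
    rw [show (4 * (s : ℝ) + n) ^ 2 - 4 = (4 * s + n - 2) * (4 * s + n + 2) by ring]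
    exact mul_ne_zero h1 h3
  unfold acoef
  congr 1
  rw [one_sub_div h4, one_sub_div (pow_ne_zero 2 h2), div_mul_div_comm, div_div,
    div_eq_div_iff (by positivity) (by positivity)]
  ring

theorem acoef_mono (hn : 5 ≤ n) : Monotone (acoef n) := by
  intro s t hst
  have hN : (5 : ℝ) ≤ n := by exact_mod_cast hn
  have hS : (0 : ℝ) ≤ s := s.cast_nonneg
  have hST : (s : ℝ) ≤ t := by exact_mod_cast hst
  rw [acoef_eq_sqrt (by omega), acoef_eq_sqrt (by omega)]
  have hD4 : 0 < (4 * (s : ℝ) + n) ^ 2 - 4 := by nlinarith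
  have hp : 0 ≤ ((n : ℝ) - 2) ^ 2 - 4 := by nlinarith
  have f1 : 1 - (((n : ℝ) - 2) ^ 2 - 4) / ((4 * s + n) ^ 2 - 4) ≤
      1 - (((n : ℝ) - 2) ^ 2 - 4) / ((4 * t + n) ^ 2 - 4) := by
    gcongr
  have f2 : 1 - ((n : ℝ) - 4) ^ 2 / (4 * s + n) ^ 2 ≤
      1 - ((n : ℝ) - 4) ^ 2 / (4 * t + n) ^ 2 := by
    gcongr
  have g1 : 0 ≤ 1 - (((n : ℝ) - 2) ^ 2 - 4) / ((4 * s + n) ^ 2 - 4) :=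
    sub_nonneg.mpr (div_le_one_of_le₀ (by nlinarith) hD4.le)
  have g2 : 0 ≤ 1 - ((n : ℝ) - 4) ^ 2 / (4 * s + n) ^ 2 :=
    sub_nonneg.mpr (div_le_one_of_le₀ (by nlinarith) (by positivity))
  exact Real.sqrt_le_sqrt (div_le_div_of_nonneg_right (mul_le_mul f1 f2 g2 (g1.trans f1))
    (by norm_num))

end Coefficients

section JacobiMatrix

theorem Jmat_isHermitian (n k : ℕ) : (Jmat n k).IsHermitian := by
  refine Matrix.IsHermitian.ext fun i j => ?_
  simp only [Jmat, star_trivial]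
  split_ifs <;> first | rfl | omega | congr 1

variable {n k : ℕ}

theorem Jmat_nonneg (hn : 5 ≤ n) (i j : Fin (k + 1)) : 0 ≤ Jmat n k i j := by
  unfold Jmat
  split_ifs
  exacts [bcoef_nonneg hn _, acoef_nonneg _ _, acoef_nonneg _ _, le_rfl]

theorem Jmat_eq_zero {i j : Fin (k + 1)} (h : (i : ℕ) + 1 < j ∨ (j : ℕ) + 1 < i) :
    Jmat n k i j = 0 := by
  unfold Jmat
  split_ifs <;> first | rfl | omega

theorem sum_Jmat_row (i : Fin (k + 1)) :
    ∑ j, Jmat n k i j = bcoef n i + (if (i : ℕ) < k then acoef n i else 0) +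
      (if 0 < (i : ℕ) then acoef n (i - 1) else 0) := by
  have hsplit : ∀ j : Fin (k + 1), Jmat n k i j =
      (if (j : ℕ) = i then bcoef n i else 0) + (if (j : ℕ) = i + 1 then acoef n i else 0) +
        (if 0 < (i : ℕ) then (if (j : ℕ) = i - 1 then acoef n (i - 1) else 0) else 0) := by
    intro j
    unfold Jmat
    split_ifs <;> (try simp only [add_zero, zero_add]) <;> first | omega | rfl | congr 1
  have hi : (i : ℕ) - 1 < k + 1 := by omega
  simp only [hsplit, Finset.sum_add_distrib, Finset.sum_ite_irrel, Fin.sum_ite_val_eq, i.is_lt,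
    hi, if_true, Finset.sum_const_zero, add_lt_add_iff_right]

end JacobiMatrix

section Eigenvalue

variable {n : ℕ}

theorem maxEig_le_bcoef_add_two_mul_acoef (hn : 5 ≤ n) (k : ℕ) :
    maxEig n k ≤ bcoef n k + 2 * acoef n k := by
  refine Matrix.sSup_spectrum_le_of_sum_abs_le fun i => ?_
  simp only [abs_of_nonneg (Jmat_nonneg hn i _)]
  rw [sum_Jmat_row]
  have hb := bcoef_mono hn i.is_le
  have ha₁ := acoef_mono hn i.is_le
  have ha₂ := acoef_mono hn ((Nat.sub_le _ 1).trans i.is_le)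
  have ha₁₀ := acoef_nonneg n i
  have ha₂₀ := acoef_nonneg n (i - 1)
  split_ifs <;> linarith

theorem one_sub_two_div_mul_le_maxEig (hn : 5 ≤ n) {k r : ℕ} (hr : 1 ≤ r) (hrk : r ≤ k) :
    (1 - 2 / ((r : ℝ) + 1)) * (bcoef n (k - r) + 2 * acoef n (k - r)) ≤ maxEig n k := by
  set c := bcoef n (k - r) + 2 * acoef n (k - r)
  set x : Fin (k + 1) → ℝ := fun i => if (i : ℕ) ∈ Finset.Ico (k - r) (k + 1) then 1 else 0
  have hx0 : ∀ i, 0 ≤ x i := fun i => by simp only [x]; split_ifs <;> norm_num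
  have hxx : x ⬝ᵥ x = r + 1 := by
    have hsq : ∀ i, x i * x i = x i := fun i => by simp only [x]; split_ifs <;> norm_num
    simp only [dotProduct, hsq]
    rw [Fin.sum_ite_val_mem_Ico le_rfl, show k + 1 - (k - r) = r + 1 by omega]
    push_cast
    ring
  have hrow : ∀ i : Fin (k + 1), (i : ℕ) ∈ Finset.Ico (k - r + 1) k →
      c ≤ x i * (Jmat n k *ᵥ x) i := by
    intro i hi
    rw [Finset.mem_Ico] at hi
    have hxi : x i = 1 := if_pos (Finset.mem_Ico.mpr (by omega))
    have hJx : (Jmat n k *ᵥ x) i = ∑ j, Jmat n k i j := by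
      simp only [mulVec, dotProduct]
      refine Finset.sum_congr rfl fun j _ => ?_
      by_cases hj : (j : ℕ) ∈ Finset.Ico (k - r) (k + 1)
      · simp only [x, if_pos hj, mul_one]
      · rw [Finset.mem_Ico] at hj
        rw [Jmat_eq_zero (by omega), zero_mul]
    rw [hxi, one_mul, hJx, sum_Jmat_row, if_pos (by omega), if_pos (by omega)]
    have hb := bcoef_mono hn (show k - r ≤ i by omega)
    have ha₁ := acoef_mono hn (show k - r ≤ i by omega)
    have ha₂ := acoef_mono hn (show k - r ≤ i - 1 by omega)
    linarith
  have hquad : ((r : ℝ) - 1) * c ≤ x ⬝ᵥ Jmat n k *ᵥ x := by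
    calc ((r : ℝ) - 1) * c
        = ∑ i : Fin (k + 1), if (i : ℕ) ∈ Finset.Ico (k - r + 1) k then c else 0 := by
          rw [Fin.sum_ite_val_mem_Ico (by omega), show k - (k - r + 1) = r - 1 by omega,
            Nat.cast_sub hr, Nat.cast_one]
      _ ≤ x ⬝ᵥ Jmat n k *ᵥ x := Finset.sum_le_sum fun i _ => by
          split_ifs with h
          · exact hrow i h
          · exact mul_nonneg (hx0 i)
              (Finset.sum_nonneg fun j _ => mul_nonneg (Jmat_nonneg hn i j) (hx0 j) :
                0 ≤ ∑ j, Jmat n k i j * x j)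
  have hray := (Jmat_isHermitian n k).dotProduct_mulVec_le_sSup_spectrum x
  rw [hxx] at hray
  have hr₀ : (0 : ℝ) < r + 1 := by positivity
  rw [show 1 - 2 / ((r : ℝ) + 1) = (r - 1) / (r + 1) by field_simp; ring, div_mul_eq_mul_div,
    div_le_iff₀ hr₀]
  exact hquad.trans hray

end Eigenvalue

section Asymptotics

variable {n s : ℕ → ℕ} {c : ℝ}

theorem tendsto_bcoef (hD : Tendsto (fun j => 4 * (s j : ℝ) + n j) atTop atTop)
    (hc : Tendsto (fun j => (n j : ℝ) / (4 * s j + n j)) atTop (𝓝 c)) :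
    Tendsto (fun j => bcoef (n j) (s j)) atTop (𝓝 ((1 - c ^ 2) / 2)) := by
  have hy : Tendsto (fun j => 1 / (4 * (s j : ℝ) + n j)) atTop (𝓝 0) :=
    tendsto_const_nhds.div_atTop hD
  have h1 : Tendsto (fun _ : ℕ => (1 : ℝ)) atTop (𝓝 1) := tendsto_const_nhds
  have hlim := (h1.sub (((hc.sub (hy.const_mul 2)).mul
    (hc.sub (hy.const_mul 4))).div (h1.sub (hy.const_mul 4))
      (by norm_num : (1 : ℝ) - 4 * 0 ≠ 0))).const_mul (1 / 2 : ℝ)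
  rw [show (1 / 2 : ℝ) * (1 - (c - 2 * 0) * (c - 4 * 0) / (1 - 4 * 0)) = (1 - c ^ 2) / 2 by
    ring] at hlim
  refine hlim.congr' ?_
  filter_upwards [hD.eventually_gt_atTop 4] with j hj
  simp only [bcoef, Pi.div_apply]
  field_simp

theorem tendsto_acoef (hD : Tendsto (fun j => 4 * (s j : ℝ) + n j) atTop atTop)
    (hc : Tendsto (fun j => (n j : ℝ) / (4 * s j + n j)) atTop (𝓝 c)) :
    Tendsto (fun j => acoef (n j) (s j)) atTop (𝓝 ((1 - c ^ 2) / 4)) := by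
  have hc₀ : 0 ≤ c := ge_of_tendsto' hc fun j => by positivity
  have hc₁ : c ≤ 1 := le_of_tendsto' hc fun j =>
    div_le_one_of_le₀ (by linarith [(s j).cast_nonneg (α := ℝ)]) (by positivity)
  have hy : Tendsto (fun j => 1 / (4 * (s j : ℝ) + n j)) atTop (𝓝 0) :=
    tendsto_const_nhds.div_atTop hD
  have h1 : Tendsto (fun _ : ℕ => (1 : ℝ)) atTop (𝓝 1) := tendsto_const_nhds
  have hlim := ((((h1.sub hc).add (hy.const_mul 2)).mul ((h1.sub hc).add (hy.const_mul 4))).mul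
    (((h1.add hc).sub (hy.const_mul 4)).mul ((h1.add hc).sub (hy.const_mul 2)))).div
    (((h1.sub (hy.const_mul 2)).mul (h1.add (hy.const_mul 2))).const_mul 16)
      (by norm_num : (16 : ℝ) * ((1 - 2 * 0) * (1 + 2 * 0)) ≠ 0) |>.sqrt
  rw [show (1 - c + 2 * 0) * (1 - c + 4 * 0) * ((1 + c - 4 * 0) * (1 + c - 2 * 0)) /
      (16 * ((1 - 2 * 0) * (1 + 2 * 0))) = ((1 - c ^ 2) / 4) ^ 2 by ring,
    Real.sqrt_sq (by nlinarith)] at hlim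
  refine hlim.congr' ?_
  filter_upwards [hD.eventually_gt_atTop 2] with j hj
  simp only [acoef, Pi.div_apply]
  congr 1
  field_simp
  ring

theorem tendsto_bcoef_add_two_mul_acoef
    (hD : Tendsto (fun j => 4 * (s j : ℝ) + n j) atTop atTop)
    (hc : Tendsto (fun j => (n j : ℝ) / (4 * s j + n j)) atTop (𝓝 c)) :
    Tendsto (fun j => bcoef (n j) (s j) + 2 * acoef (n j) (s j)) atTop (𝓝 (1 - c ^ 2)) := by
  convert (tendsto_bcoef hD hc).add ((tendsto_acoef hD hc).const_mul 2) using 2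
  ring

theorem tendsto_div_four_mul_add {n k s : ℕ → ℕ} {ℓ : ℝ} (hℓ : 0 ≤ ℓ)
    (hratio : Tendsto (fun j => (n j : ℝ) / (2 * (k j : ℝ))) atTop (𝓝 ℓ))
    (hs : Tendsto (fun j => (s j : ℝ) / k j) atTop (𝓝 1)) :
    Tendsto (fun j => (n j : ℝ) / (4 * s j + n j)) atTop (𝓝 (ℓ / (2 + ℓ))) := by
  have h := hratio.div ((hs.const_mul 2).add hratio) (by linarith : (2 : ℝ) * 1 + ℓ ≠ 0)
  rw [mul_one] at h
  refine h.congr' ?_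
  filter_upwards [hs.eventually (lt_mem_nhds one_pos)] with j hj
  have hk : (k j : ℝ) ≠ 0 := fun h0 => by simp [h0] at hj
  simp only [Pi.div_apply]
  field_simp
  ring

theorem tendsto_nat_sqrt_atTop : Tendsto Nat.sqrt atTop atTop :=
  tendsto_atTop_atTop.mpr fun b => ⟨b * b, fun _ hm => Nat.le_sqrt.mpr hm⟩

theorem tendsto_sub_sqrt_div_self :
    Tendsto (fun m : ℕ => ((m - m.sqrt : ℕ) : ℝ) / m) atTop (𝓝 1) := by
  have hsqrt : Tendsto (fun m : ℕ => (m.sqrt : ℝ)) atTop atTop :=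
    tendsto_natCast_atTop_atTop.comp tendsto_nat_sqrt_atTop
  have hsmall : Tendsto (fun m : ℕ => (m.sqrt : ℝ) / m) atTop (𝓝 0) := by
    refine squeeze_zero' (Eventually.of_forall fun m => by positivity) ?_
      (tendsto_const_nhds.div_atTop hsqrt : Tendsto (fun m : ℕ => 1 / (m.sqrt : ℝ)) _ _)
    filter_upwards [eventually_ge_atTop 1] with m hm
    have hr : (0 : ℝ) < m.sqrt := by exact_mod_cast Nat.sqrt_pos.mpr hm
    rw [div_le_div_iff₀ (by positivity) hr, one_mul]
    exact_mod_cast Nat.sqrt_le m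
  refine (sub_zero (1 : ℝ) ▸ (tendsto_const_nhds (x := (1 : ℝ))).sub hsmall).congr' ?_
  filter_upwards [eventually_ge_atTop 1] with m hm
  rw [Nat.cast_sub (Nat.sqrt_le_self m), sub_div, div_self (by positivity)]

end Asymptotics

/-- if `n/(2k) → ℓ > 0` as `n, k → ∞`, the largest eigenvalue of the Jacobi
matrix `J'_k` converges to `4(ℓ+1)/(ℓ+2)²`. -/
theorem stmt19 (ℓ : ℝ) (hℓ : 0 < ℓ) (n k : ℕ → ℕ)
    (hn : Tendsto n atTop atTop) (hk : Tendsto k atTop atTop)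
    (hratio : Tendsto (fun j => (n j : ℝ) / (2 * (k j : ℝ))) atTop (nhds ℓ)) :
    Tendsto (fun j => maxEig (n j) (k j)) atTop
      (nhds (4 * (ℓ + 1) / (ℓ + 2) ^ 2)) := by
  have hlimit : 4 * (ℓ + 1) / (ℓ + 2) ^ 2 = 1 - (ℓ / (2 + ℓ)) ^ 2 := by
    field_simp
    ring
  have hcoef {s : ℕ → ℕ} (hs : Tendsto (fun j => (s j : ℝ) / k j) atTop (𝓝 1)) :
      Tendsto (fun j => bcoef (n j) (s j) + 2 * acoef (n j) (s j)) atTop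
        (𝓝 (1 - (ℓ / (2 + ℓ)) ^ 2)) :=
    tendsto_bcoef_add_two_mul_acoef
      (tendsto_atTop_mono (fun j => le_add_of_nonneg_left (by positivity))
        (tendsto_natCast_atTop_atTop.comp hn))
      (tendsto_div_four_mul_add hℓ.le hratio hs)
  have hupper := hcoef (s := k) <| tendsto_const_nhds.congr' <| by
    filter_upwards [hk.eventually_ge_atTop 1] with j hj
    rw [div_self (by positivity)]
  have hr : Tendsto (fun j => ((k j).sqrt : ℝ) + 1) atTop atTop :=
    tendsto_atTop_add_const_right _ 1
      (tendsto_natCast_atTop_atTop.comp (tendsto_nat_sqrt_atTop.comp hk))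
  have hlower := ((tendsto_const_nhds (x := (1 : ℝ))).sub
    ((tendsto_const_nhds (x := (2 : ℝ))).div_atTop hr)).mul
      (hcoef (tendsto_sub_sqrt_div_self.comp hk))
  rw [sub_zero, one_mul] at hlower
  rw [hlimit]
  refine tendsto_of_tendsto_of_tendsto_of_le_of_le' hlower hupper ?_ ?_
  · filter_upwards [hn.eventually_ge_atTop 5, hk.eventually_ge_atTop 1] with j hn5 hk1
    exact one_sub_two_div_mul_le_maxEig hn5 (Nat.sqrt_pos.mpr hk1) (Nat.sqrt_le_self _)
  · filter_upwards [hn.eventually_ge_atTop 5] with j hn5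
    exact maxEig_le_bcoef_add_two_mul_acoef hn5 _
end
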